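/- arXiv:2410.19515 — 4 statements merged into one kernel-verified Lean document; each statement's English description precedes it below -/
import Mathlib

section
/- Let T be a pruned tree of height ω with |T| = λ, where λ is an infinite cardinal. Then the set [T] of cofinal branches of T has cardinality at most λ, or has cardinality exactly λ^{ℵ₀}. -/
/-!
Call a node big if more than `λ` cofinal branches pass through it. Only `λ` branches meet a
node that is not big (there are `≤ λ` such nodes, each on `≤ λ` branches), so if `[T]` has more
than `λ` elements there are big nodes, and above a big node the big nodes never form a chain.

Choose a big node `x₀` for which the set of big nodes above it has least size `κ`; then every
big node above `x₀` has exactly `κ` big nodes above it. The branches through `x₀` that stay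
among the big nodes are determined by countable subsets of a set of size `κ`, so `λ < κ^ℵ₀`.
Conversely, minimality makes every big node above `x₀` (or above a suitable `x₁`) carry
antichains of big nodes at least as large as any level of the cone; threading a path through
such antichains, one coordinate of a pair `(n, m) ∈ ℕ × ℕ` per step, embeds `κ^ℵ₀` into `[T]`.
Hence `λ^ℵ₀ ≤ (κ^ℵ₀)^ℵ₀ = κ^ℵ₀ ≤ |[T]| ≤ λ^ℵ₀`.
-/

open Cardinal Ordinal

/-- The height of an element `x` of a tree: the order type of its set of strict
predecessors (or `0` by convention if the predecessors are not well-ordered). -/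
noncomputable def elemHeight {α : Type} [PartialOrder α] (x : α) : Ordinal := by
  classical
  exact if h : IsWellOrder {y : α // y < x} (· < ·) then
    @Ordinal.type {y : α // y < x} (· < ·) h else 0

/-- A partial order is a tree order if the set of strict predecessors of every element
is well-ordered by `<`. -/
def IsTreeOrder (α : Type) [PartialOrder α] : Prop :=
  ∀ x : α, IsWellOrder {y : α // y < x} (· < ·)

/-- The `o`-th level of a tree: the set of elements of height `o`. -/
def level (α : Type) [PartialOrder α] (o : Ordinal) : Set α :=
  {x : α | elemHeight x = o}

/-- The height of a tree: the least ordinal whose corresponding level is empty. -/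
noncomputable def treeHeight (α : Type) [PartialOrder α] : Ordinal :=
  sInf {o : Ordinal | level α o = ∅}

/-- A cofinal branch of a tree: a maximal chain meeting every nonempty level. -/
def IsCofinalBranch (α : Type) [PartialOrder α] (B : Set α) : Prop :=
  IsMaxChain (· < ·) B ∧
    ∀ o : Ordinal, (level α o).Nonempty → ∃ y ∈ B, elemHeight y = o

/-- The number of cofinal branches of a tree. -/
noncomputable def branchCard (α : Type) [PartialOrder α] : Cardinal :=
  #{B : Set α // IsCofinalBranch α B}

open Set

theorem level_nonempty_of_lt_treeHeight {α : Type} [PartialOrder α] {o : Ordinal}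
    (h : o < treeHeight α) : (level α o).Nonempty := by
  by_contra hempty
  exact h.not_ge (csInf_le' (not_nonempty_iff_eq_empty.1 hempty))

def branchingPath {α : Type} {S : Set α} {D : ℕ → Type} (next : S → ∀ k, D k → S) (x : S)
    (f : ∀ k, D k) : ℕ → S
  | 0 => x
  | k + 1 => next (branchingPath next x f k) k (f k)

def branchesThrough {α : Type} [PartialOrder α] (x : α) : Set (Set α) :=
  {B | IsCofinalBranch α B ∧ x ∈ B}

def bigNodes (α : Type) [PartialOrder α] (lam : Cardinal) : Set α :=
  {x | lam < #(branchesThrough x)}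

namespace IsTreeOrder

variable {α : Type} [PartialOrder α] (ht : IsTreeOrder α)
include ht

theorem elemHeight_eq_type (x : α) :
    elemHeight x = @Ordinal.type {y : α // y < x} (· < ·) (ht x) := by
  rw [elemHeight, dif_pos (ht x)]

theorem elemHeight_eq_typein {x y : α} (h : y < x) :
    elemHeight y = @Ordinal.typein {z : α // z < x} (· < ·) (ht x) ⟨y, h⟩ := by
  have := ht x
  have := ht y
  rw [ht.elemHeight_eq_type, ← Ordinal.type_subrel]
  exact RelIso.ordinalType_congr ⟨⟨fun z => ⟨⟨z.1, z.2.trans h⟩, z.2⟩, fun z => ⟨z.1.1, z.2⟩,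
    fun _ => rfl, fun _ => rfl⟩, Iff.rfl⟩

theorem elemHeight_strictMono : StrictMono (elemHeight : α → Ordinal) := fun y x h => by
  have := ht x
  rw [ht.elemHeight_eq_typein h, ht.elemHeight_eq_type]
  exact Ordinal.typein_lt_type _ _

theorem exists_le_elemHeight_eq {x : α} {o : Ordinal} (h : o ≤ elemHeight x) :
    ∃ y ≤ x, elemHeight y = o := by
  obtain rfl | h := h.eq_or_lt
  · exact ⟨x, le_rfl, rfl⟩
  have := ht x
  rw [ht.elemHeight_eq_type] at h
  obtain ⟨⟨y, hy⟩, rfl⟩ := Ordinal.typein_surj (α := {z : α // z < x}) (· < ·) h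
  exact ⟨y, hy.le, ht.elemHeight_eq_typein hy⟩

theorem le_total_of_le {x y z : α} (hy : y ≤ x) (hz : z ≤ x) : y ≤ z ∨ z ≤ y := by
  obtain rfl | hy := hy.eq_or_lt
  · exact Or.inr hz
  obtain rfl | hz := hz.eq_or_lt
  · exact Or.inl hy.le
  have := ht x
  rcases trichotomous_of (· < ·) (⟨y, hy⟩ : {w // w < x}) ⟨z, hz⟩ with h | h | h
  · exact Or.inl (le_of_lt h)
  · exact Or.inl (congrArg Subtype.val h).le
  · exact Or.inr (le_of_lt h)

theorem eq_of_le_of_elemHeight_eq {y z : α} (hle : y ≤ z) (h : elemHeight y = elemHeight z) :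
    y = z :=
  hle.eq_or_lt.resolve_right fun hlt => (ht.elemHeight_strictMono hlt).ne h

theorem isAntichain_level (o : Ordinal) : IsAntichain (· ≤ ·) (level α o) :=
  fun _ hy _ hz hne hle => hne (ht.eq_of_le_of_elemHeight_eq hle (hy.trans hz.symm))

theorem mem_of_le_of_isMaxChain {B : Set α} (hB : IsMaxChain (· < ·) B) {w z : α} (hz : z ∈ B)
    (hw : w ≤ z) : w ∈ B := by
  suffices hins : IsChain (· < ·) (insert w B) by
    rw [hB.2 hins (subset_insert w B)]
    exact mem_insert w B
  refine hB.1.insert fun b hb hne => ?_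
  have hbw : b ≤ w ∨ w ≤ b := by
    obtain rfl | hbz := eq_or_ne b z
    · exact Or.inr hw
    rcases hB.1 hb hz hbz with h | h
    · exact ht.le_total_of_le h.le hw
    · exact Or.inr (hw.trans h.le)
  exact hbw.symm.imp hne.lt_of_le (fun h => h.lt_of_ne hne.symm)

theorem subset_of_inter_Ioi_subset {B B' : Set α} (hB : IsChain (· < ·) B)
    (hB' : IsMaxChain (· < ·) B') {y : α} (hy : y ∈ B) (hy' : y ∈ B') (h : B ∩ Ioi y ⊆ B') :
    B ⊆ B' := by
  intro z hz
  rcases (hB.mono_rel fun _ _ => le_of_lt).total hz hy with hzy | hyz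
  · exact ht.mem_of_le_of_isMaxChain hB' hy' hzy
  obtain rfl | hyz := hyz.eq_or_lt
  · exact hy'
  · exact h ⟨hz, hyz⟩

theorem eq_of_inter_Ioi_eq {B B' : Set α} (hB : IsMaxChain (· < ·) B)
    (hB' : IsMaxChain (· < ·) B') {y : α} (hy : y ∈ B) (hy' : y ∈ B')
    (h : B ∩ Ioi y = B' ∩ Ioi y) : B = B' :=
  (ht.subset_of_inter_Ioi_subset hB.1 hB' hy hy' (h ▸ inter_subset_left)).antisymm
    (ht.subset_of_inter_Ioi_subset hB'.1 hB hy' hy (h ▸ inter_subset_left))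

theorem mk_branchesThrough_inter_Ioi_subset_le_one {T : Set α} {y : α}
    (hT : IsChain (· ≤ ·) (T ∩ Ioi y)) :
    #{B ∈ branchesThrough y | B ∩ Ioi y ⊆ T} ≤ 1 := by
  have hfull : ∀ B ∈ {B ∈ branchesThrough y | B ∩ Ioi y ⊆ T}, B ∩ Ioi y = T ∩ Ioi y := by
    rintro B ⟨⟨hB, hyB⟩, hBT⟩
    refine (subset_inter hBT inter_subset_right).antisymm fun c hc => ⟨?_, hc.2⟩
    have hunion : IsChain (· < ·) (B ∪ (T ∩ Ioi y)) := by
      refine isChain_union.2 ⟨hB.1.1, hT.lt_of_le, fun a ha c hc hac => ?_⟩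
      rcases (hB.1.1.mono_rel fun _ _ => le_of_lt).total ha hyB with hay | hya
      · exact Or.inl (hay.trans_lt hc.2)
      obtain rfl | hya := hya.eq_or_lt
      · exact Or.inl hc.2
      · exact hT.lt_of_le ⟨hBT ⟨ha, hya⟩, hya⟩ hc hac
    exact (hB.1.2 hunion subset_union_left).symm ▸ mem_union_right B hc
  refine mk_le_one_iff_set_subsingleton.2 fun B hB B' hB' => ?_
  exact ht.eq_of_inter_Ioi_eq hB.1.1.1 hB'.1.1.1 hB.1.2 hB'.1.2
    ((hfull B hB).trans (hfull B' hB').symm)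

section HeightOmega

variable (hh : treeHeight α = Ordinal.omega0)
include hh

theorem elemHeight_lt_omega0 (x : α) : elemHeight x < Ordinal.omega0 := by
  have hne : {o | level α o = ∅}.Nonempty := by
    by_contra h
    rw [not_nonempty_iff_eq_empty] at h
    rw [treeHeight, h, Ordinal.sInf_empty] at hh
    exact Ordinal.omega0_ne_zero hh.symm
  have hω : level α Ordinal.omega0 = ∅ := hh ▸ csInf_mem hne
  by_contra! hx
  obtain ⟨y, -, hy⟩ := ht.exists_le_elemHeight_eq hx
  exact hω.subset hy

theorem exists_nat_elemHeight_eq (x : α) : ∃ n : ℕ, elemHeight x = n :=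
  Ordinal.lt_omega0.1 (ht.elemHeight_lt_omega0 hh x)

theorem mk_le_aleph0_of_isChain {C : Set α} (hC : IsChain (· < ·) C) : #C ≤ ℵ₀ := by
  refine le_aleph0_iff_set_countable.2 (countable_of_injective_of_countable_image
    (f := elemHeight) (fun a ha b hb hab => ?_)
    ((countable_range (Nat.cast : ℕ → Ordinal)).mono ?_))
  · by_contra hne
    rcases hC ha hb hne with h | h
    · exact (ht.elemHeight_strictMono h).ne hab
    · exact (ht.elemHeight_strictMono h).ne' hab
  · rintro _ ⟨x, -, rfl⟩
    obtain ⟨n, hn⟩ := ht.exists_nat_elemHeight_eq hh x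
    exact ⟨n, hn.symm⟩

theorem branchCard_le_power : branchCard α ≤ max #α ℵ₀ ^ ℵ₀ :=
  (mk_le_mk_of_subset fun _ hB => ht.mk_le_aleph0_of_isChain hh hB.1.1).trans
    (mk_bounded_set_le α ℵ₀)

theorem exists_isCofinalBranch_range_subset {u : ℕ → α} (hu : StrictMono u) :
    ∃ B, IsCofinalBranch α B ∧ range u ⊆ B := by
  obtain ⟨B, hB, hsub⟩ := hu.monotone.isChain_range.lt_of_le.exists_maxChain
  refine ⟨B, ⟨hB, fun o ⟨w, hw⟩ => ?_⟩, hsub⟩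
  obtain ⟨n, hn⟩ := ht.exists_nat_elemHeight_eq hh w
  have hun : ∀ n : ℕ, (n : Ordinal) ≤ elemHeight (u n) := by
    intro n
    induction n with
    | zero => simp
    | succ n ih =>
      rw [Nat.cast_succ]
      exact Order.add_one_le_of_lt (ih.trans_lt (ht.elemHeight_strictMono (hu n.lt_succ_self)))
  obtain ⟨y, hy, hyn⟩ := ht.exists_le_elemHeight_eq (hun n)
  exact ⟨y, ht.mem_of_le_of_isMaxChain hB (hsub (mem_range_self n)) hy,
    hyn.trans (hn.symm.trans hw)⟩

theorem exists_level_lt_mk {T : Set α} {ρ : Cardinal} (hρ : ℵ₀ ≤ ρ) (hT : ρ < #T) :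
    ∃ n : ℕ, ρ < #(T ∩ level α n : Set α) := by
  by_contra! h
  have hcover : T = ⋃ n : ℕ, T ∩ level α n := by
    ext x
    obtain ⟨n, hn⟩ := ht.exists_nat_elemHeight_eq hh x
    simp only [mem_iUnion, mem_inter_iff]
    exact ⟨fun hx => ⟨n, hx, hn⟩, fun ⟨_, hx, _⟩ => hx⟩
  refine hT.not_ge ?_
  calc #T = #(⋃ n : ℕ, T ∩ level α n) := by rw [← hcover]
    _ ≤ #ℕ * ⨆ n : ℕ, #(T ∩ level α n : Set α) := mk_iUnion_le _
    _ ≤ ℵ₀ * ρ := mul_le_mul' mk_nat.le (ciSup_le' h)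
    _ = ρ := aleph0_mul_eq hρ

theorem mk_pi_le_branchCard {S : Set α} (hS : S.Nonempty) {D : ℕ → Type}
    (hA : ∀ y ∈ S, ∀ k, ∃ A ⊆ S ∩ Ioi y, IsAntichain (· ≤ ·) A ∧ #(D k) ≤ #A) :
    #(∀ k, D k) ≤ branchCard α := by
  have hnext : ∀ (y : S) k, ∃ g : D k → S, ∀ d d', y.1 < g d ∧ ((g d : α) ≤ g d' → d = d') := by
    intro y k
    obtain ⟨A, hAS, hA, hDA⟩ := hA y y.2 k
    obtain ⟨e⟩ := hDA
    exact ⟨fun d => ⟨e d, (hAS (e d).2).1⟩, fun d d' => ⟨(hAS (e d).2).2,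
      fun hle => e.injective (Subtype.ext (hA.eq (e d).2 (e d').2 hle))⟩⟩
  choose next hnext using hnext
  obtain ⟨x, hx⟩ := hS
  set path := branchingPath next ⟨x, hx⟩
  have hpath : ∀ f, StrictMono fun k => (path f k : α) := fun f =>
    strictMono_nat_of_lt_succ fun k => (hnext _ k (f k) (f k)).1
  choose Φ hΦ hΦpath using fun f => ht.exists_isCofinalBranch_range_subset hh (hpath f)
  refine mk_le_of_injective (f := fun f => (⟨Φ f, hΦ f⟩ : {B // IsCofinalBranch α B}))
    fun f g hfg => ?_
  replace hfg : Φ f = Φ g := congrArg Subtype.val hfg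
  -- the two successors chosen at step `k` both lie on the chain `Φ f`, so they are comparable
  have hstep : ∀ k, path f k = path g k → f k = g k := by
    intro k hk
    have hf : (next (path f k) k (f k) : α) ∈ Φ f := hΦpath f (mem_range_self (k + 1))
    have hg : (next (path f k) k (g k) : α) ∈ Φ f :=
      hk ▸ hfg ▸ hΦpath g (mem_range_self (k + 1))
    rcases ((hΦ f).1.1.mono_rel fun _ _ => le_of_lt).total hf hg with h | h
    · exact (hnext _ k _ _).2 h
    · exact ((hnext _ k _ _).2 h).symm
  have hpath_eq : ∀ k, path f k = path g k := by
    intro k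
    induction k with
    | zero => rfl
    | succ k ih =>
      show next (path f k) k (f k) = next (path g k) k (g k)
      rw [ih, hstep k ih]
  exact funext fun k => hstep k (hpath_eq k)

theorem mk_inter_Ioi_power_le_branchCard {T : Set α} {x : α} (hx : x ∈ T)
    (hA : ∀ y ∈ T ∩ Ici x, ∀ m : ℕ, ∃ A ⊆ T ∩ Ioi y, IsAntichain (· ≤ ·) A ∧
      #(T ∩ Ioi x ∩ level α m : Set α) + 1 ≤ #A) :
    #(T ∩ Ioi x : Set α) ^ ℵ₀ ≤ branchCard α := by
  set W := T ∩ Ioi x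
  -- `w ∈ W` is coded by the family of its traces on the levels of `W`
  let enc : W → ∀ m : ℕ, Option ↥(W ∩ level α m) := fun w m =>
    if h : elemHeight (w : α) = m then some ⟨w, w.2, h⟩ else none
  have henc : ∀ (m : ℕ) (w w' : W), elemHeight (w : α) = m → enc w m = enc w' m → w = w' := by
    intro m w w' hw h
    by_cases hw' : elemHeight (w' : α) = m
    · simp only [enc, dif_pos hw, dif_pos hw', Option.some.injEq] at h
      exact Subtype.ext (congrArg Subtype.val h :)
    · simp [enc, dif_pos hw, dif_neg hw'] at h
  let F : (ℕ → W) → ∀ k : ℕ, Option ↥(W ∩ level α k.unpair.2) := fun f k =>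
    enc (f k.unpair.1) k.unpair.2
  have hF : Function.Injective F := by
    intro f g h
    funext n
    obtain ⟨m, hm⟩ := ht.exists_nat_elemHeight_eq hh (f n : α)
    have := henc _ _ _ (by rw [Nat.unpair_pair]; exact hm) (congrFun h (Nat.pair n m))
    rwa [Nat.unpair_pair] at this
  calc #W ^ ℵ₀ = #(ℕ → W) := by rw [← power_def, mk_nat]
    _ ≤ #(∀ k : ℕ, Option ↥(W ∩ level α k.unpair.2)) := mk_le_of_injective hF
    _ ≤ branchCard α := by
      refine ht.mk_pi_le_branchCard hh (S := T ∩ Ici x) ⟨x, hx, le_rfl⟩ fun y hy k => ?_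
      obtain ⟨A, hAT, hA, hWA⟩ := hA y hy k.unpair.2
      refine ⟨A, fun a ha => ⟨⟨(hAT ha).1, hy.2.trans (hAT ha).2.le⟩, (hAT ha).2⟩, hA, ?_⟩
      rwa [mk_option]

theorem mk_branchesThrough_inter_Ioi_subset_le_power (T : Set α) (y : α) :
    #{B ∈ branchesThrough y | B ∩ Ioi y ⊆ T} ≤ max #(T ∩ Ioi y : Set α) ℵ₀ ^ ℵ₀ := by
  let trace : {B ∈ branchesThrough y | B ∩ Ioi y ⊆ T} → {t : Set ↥(T ∩ Ioi y) // #t ≤ ℵ₀} :=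
    fun B => ⟨Subtype.val ⁻¹' B.1, (mk_preimage_of_injective _ _ Subtype.val_injective).trans
      (ht.mk_le_aleph0_of_isChain hh B.2.1.1.1.1)⟩
  have htrace : ∀ B, Subtype.val '' (trace B).1 = B.1 ∩ Ioi y := fun B => by
    rw [Subtype.image_preimage_coe]
    exact Subset.antisymm (fun z hz => ⟨hz.2, hz.1.2⟩) (fun z hz => ⟨⟨B.2.2 hz, hz.2⟩, hz.1⟩)
  refine (mk_le_of_injective (f := trace) fun B B' h => Subtype.ext ?_).trans
    (mk_bounded_set_le _ ℵ₀)
  exact ht.eq_of_inter_Ioi_eq B.2.1.1.1 B'.2.1.1.1 B.2.1.2 B'.2.1.2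
    (by rw [← htrace, ← htrace, h])

end HeightOmega

end IsTreeOrder

section BigNodes

variable {α : Type} [PartialOrder α] {lam : Cardinal} (hlam : ℵ₀ ≤ lam) (hα : #α ≤ lam)
include hlam hα

theorem mk_branches_meeting_compl_bigNodes_le :
    #{B | IsCofinalBranch α B ∧ ∃ z ∈ B, z ∉ bigNodes α lam} ≤ lam := by
  have hsub : {B | IsCofinalBranch α B ∧ ∃ z ∈ B, z ∉ bigNodes α lam} ⊆
      ⋃ z ∈ (bigNodes α lam)ᶜ, branchesThrough z := by
    rintro B ⟨hB, z, hzB, hz⟩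
    exact mem_biUnion hz ⟨hB, hzB⟩
  calc _ ≤ #(⋃ z ∈ (bigNodes α lam)ᶜ, branchesThrough z) := mk_le_mk_of_subset hsub
    _ ≤ #((bigNodes α lam)ᶜ : Set α) * ⨆ z : ↥(bigNodes α lam)ᶜ, #(branchesThrough z.1) :=
      mk_biUnion_le _ _
    _ ≤ lam * lam := mul_le_mul' ((mk_set_le _).trans hα) (ciSup_le' fun z => not_lt.1 z.2)
    _ = lam := mul_eq_self hlam

theorem mk_branchesThrough_le (y : α) :
    #(branchesThrough y) ≤ lam + #{B ∈ branchesThrough y | B ∩ Ioi y ⊆ bigNodes α lam} := by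
  have hsub : branchesThrough y ⊆ {B | IsCofinalBranch α B ∧ ∃ z ∈ B, z ∉ bigNodes α lam} ∪
      {B ∈ branchesThrough y | B ∩ Ioi y ⊆ bigNodes α lam} := by
    intro B hB
    by_cases h : B ∩ Ioi y ⊆ bigNodes α lam
    · exact Or.inr ⟨hB, h⟩
    · obtain ⟨z, hz, hzbig⟩ := not_subset.1 h
      exact Or.inl ⟨hB.1, z, hz.1, hzbig⟩
  exact (mk_le_mk_of_subset hsub).trans ((mk_union_le _ _).trans
    (add_le_add_left (mk_branches_meeting_compl_bigNodes_le hlam hα) _))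

variable (ht : IsTreeOrder α)
include ht

theorem not_isChain_bigNodes_inter_Ioi {y : α} (hy : y ∈ bigNodes α lam) :
    ¬ IsChain (· ≤ ·) (bigNodes α lam ∩ Ioi y) := fun hC =>
  hy.not_ge <| (mk_branchesThrough_le hlam hα y).trans <|
    (add_le_add_right (ht.mk_branchesThrough_inter_Ioi_subset_le_one hC) _).trans_eq
      (add_one_eq hlam)

theorem exists_antichain_of_mem_bigNodes (n : ℕ) {y : α} (hy : y ∈ bigNodes α lam) :
    ∃ A ⊆ bigNodes α lam ∩ Ioi y, IsAntichain (· ≤ ·) A ∧ n ≤ #A := by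
  induction n generalizing y with
  | zero => exact ⟨∅, empty_subset _, subsingleton_empty.isAntichain _, by simp⟩
  | succ n ih =>
    obtain ⟨z, hzbig, hyz, w, hwbig, hyw, -, hzw, hwz⟩ := by
      simpa [IsChain, Set.Pairwise] using not_isChain_bigNodes_inter_Ioi hlam hα ht hy
    -- an antichain above `z` stays an antichain when the node `w`, incomparable to `z`, is added
    obtain ⟨A, hAz, hA, hnA⟩ := ih hzbig
    have hwA : w ∉ A := fun hwA => hzw (hAz hwA).2.le
    refine ⟨insert w A, insert_subset ⟨hwbig, hyw⟩ fun a ha => ⟨(hAz ha).1, hyz.trans (hAz ha).2⟩,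
      hA.insert (fun a ha _ haw => hzw ((hAz ha).2.le.trans haw))
        (fun a ha _ hwa => ?_), ?_⟩
    · rcases ht.le_total_of_le hwa (hAz ha).2.le with h | h
      · exact hwz h
      · exact hzw h
    · rw [mk_insert hwA, Nat.cast_succ]
      exact add_le_add_left hnA 1

theorem aleph0_le_mk_bigNodes_inter_Ioi {y : α} (hy : y ∈ bigNodes α lam) :
    ℵ₀ ≤ #(bigNodes α lam ∩ Ioi y : Set α) :=
  aleph0_le.2 fun n =>
    let ⟨_, hA, _, hn⟩ := exists_antichain_of_mem_bigNodes hlam hα ht n hy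
    hn.trans (mk_le_mk_of_subset hA)

variable (hh : treeHeight α = Ordinal.omega0)
include hh

theorem exists_antichain_of_lt_mk {y : α} (hy : y ∈ bigNodes α lam) {ρ : Cardinal}
    (hρ : ρ < #(bigNodes α lam ∩ Ioi y : Set α)) :
    ∃ A ⊆ bigNodes α lam ∩ Ioi y, IsAntichain (· ≤ ·) A ∧ ρ ≤ #A := by
  rcases lt_or_ge ρ ℵ₀ with hfin | hinf
  · obtain ⟨n, rfl⟩ := lt_aleph0.1 hfin
    exact exists_antichain_of_mem_bigNodes hlam hα ht n hy
  · obtain ⟨n, hn⟩ := ht.exists_level_lt_mk hh hinf hρ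
    exact ⟨_, inter_subset_left, (ht.isAntichain_level n).subset inter_subset_right, hn.le⟩

theorem lt_power_of_mem_bigNodes {y : α} (hy : y ∈ bigNodes α lam) :
    lam < #(bigNodes α lam ∩ Ioi y : Set α) ^ ℵ₀ := by
  by_contra! h
  refine hy.not_ge ((mk_branchesThrough_le hlam hα y).trans ?_)
  calc _ ≤ lam + max #(bigNodes α lam ∩ Ioi y : Set α) ℵ₀ ^ ℵ₀ :=
        add_le_add_right (ht.mk_branchesThrough_inter_Ioi_subset_le_power hh _ y) _
    _ ≤ lam + lam := by
        rw [max_eq_left (aleph0_le_mk_bigNodes_inter_Ioi hlam hα ht hy)]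
        exact add_le_add_right h _
    _ = lam := add_eq_self hlam

theorem power_aleph0_le_branchCard_of_forall_mk_eq {x₀ : α} (hx₀ : x₀ ∈ bigNodes α lam)
    (hmin : ∀ y ∈ bigNodes α lam ∩ Ici x₀,
      #(bigNodes α lam ∩ Ioi y : Set α) = #(bigNodes α lam ∩ Ioi x₀ : Set α)) :
    #(bigNodes α lam ∩ Ioi x₀ : Set α) ^ ℵ₀ ≤ branchCard α := by
  set κ := #(bigNodes α lam ∩ Ioi x₀ : Set α)
  have hκ : ℵ₀ ≤ κ := aleph0_le_mk_bigNodes_inter_Ioi hlam hα ht hx₀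
  by_cases hA : ∃ x₁ ∈ bigNodes α lam ∩ Ici x₀,
      ∀ m : ℕ, #(bigNodes α lam ∩ Ioi x₁ ∩ level α m : Set α) < κ
  · obtain ⟨x₁, hx₁, hlevel⟩ := hA
    rw [← hmin x₁ hx₁]
    refine ht.mk_inter_Ioi_power_le_branchCard hh hx₁.1 fun y hy m =>
      exists_antichain_of_lt_mk hlam hα ht hh hy.1 ?_
    rw [hmin y ⟨hy.1, hx₁.2.trans hy.2⟩]
    exact add_lt_of_lt hκ (hlevel m) (one_lt_aleph0.trans_le hκ)
  · push Not at hA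
    refine ht.mk_inter_Ioi_power_le_branchCard hh hx₀ fun y hy m => ?_
    obtain ⟨n, hn⟩ := hA y hy
    refine ⟨_, inter_subset_left, (ht.isAntichain_level n).subset inter_subset_right, ?_⟩
    calc _ ≤ κ + 1 := add_le_add_left (mk_le_mk_of_subset inter_subset_left) 1
      _ = κ := add_one_eq hκ
      _ ≤ _ := hn

omit ht in
theorem exists_mem_bigNodes (hbig : lam < branchCard α) : (bigNodes α lam).Nonempty := by
  by_contra h
  refine hbig.not_ge ((mk_le_mk_of_subset fun B hB => ?_).trans
    (mk_branches_meeting_compl_bigNodes_le hlam hα))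
  obtain ⟨z, hz, -⟩ := hB.2 0 (level_nonempty_of_lt_treeHeight (hh ▸ Ordinal.omega0_pos))
  exact ⟨hB, z, hz, fun hzbig => h ⟨z, hzbig⟩⟩

theorem power_aleph0_le_branchCard (hbig : lam < branchCard α) : lam ^ ℵ₀ ≤ branchCard α := by
  let κ : α → Cardinal := fun y => #(bigNodes α lam ∩ Ioi y : Set α)
  have hne := exists_mem_bigNodes hlam hα hh hbig
  set x₀ := Function.argminOn κ (bigNodes α lam) hne
  have hx₀ : x₀ ∈ bigNodes α lam := Function.argminOn_mem κ _ hne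
  have hmin : ∀ y ∈ bigNodes α lam ∩ Ici x₀, κ y = κ x₀ := fun y hy =>
    (mk_le_mk_of_subset (inter_subset_inter_right _ (Ioi_subset_Ioi hy.2))).antisymm
      (Function.argminOn_le κ _ hy.1)
  calc lam ^ ℵ₀ ≤ (κ x₀ ^ ℵ₀) ^ ℵ₀ :=
        power_le_power_right (lt_power_of_mem_bigNodes hlam hα ht hh hx₀).le
    _ = κ x₀ ^ ℵ₀ := by rw [← power_mul, aleph0_mul_aleph0]
    _ ≤ branchCard α := power_aleph0_le_branchCard_of_forall_mk_eq hlam hα ht hh hx₀ hmin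

end BigNodes

theorem stmt8_general (lam : Cardinal) (hlam : ℵ₀ ≤ lam) (α : Type) [PartialOrder α]
    (hcard : #α = lam) (ht : IsTreeOrder α) (hh : treeHeight α = Ordinal.omega0) :
    branchCard α ≤ lam ∨ branchCard α = lam ^ ℵ₀ := by
  refine or_iff_not_imp_left.2 fun hbig => le_antisymm ?_
    (power_aleph0_le_branchCard hlam hcard.le ht hh (not_le.1 hbig))
  calc branchCard α ≤ max #α ℵ₀ ^ ℵ₀ := ht.branchCard_le_power hh
    _ = lam ^ ℵ₀ := by rw [hcard, max_eq_left hlam]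

/-- For a pruned tree of height `ω` of infinite cardinality `λ`, the set of cofinal
branches has cardinality at most `λ`, or exactly `λ^{ℵ₀}`. -/
theorem stmt8 (lam : Cardinal) (hlam : ℵ₀ ≤ lam) (α : Type) [PartialOrder α]
    (hcard : #α = lam) (ht : IsTreeOrder α) (hh : treeHeight α = Ordinal.omega0)
    (hpruned : ∀ x : α, ∃ B : Set α, IsCofinalBranch α B ∧ x ∈ B) :
    branchCard α ≤ lam ∨ branchCard α = lam ^ ℵ₀ :=
  stmt8_general lam hlam α hcard ht hh
end

section
/- There is no linear order M that simultaneously has a downward-closed subset order-isomorphic to ℕ (with its usual order) and a downward-closed subset order-isomorphic to ℚ (with its usual order). -/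
/-!
`ℕ` has a least element, and the least element of a downward-closed subset of a linear order is
the least element of the whole order. That element then lies in every nonempty downward-closed
subset and is least there too, which is impossible in a copy of `ℚ`.
-/

section

variable {α β : Type*}

lemma OrderIso.isBot_apply [Preorder α] [Preorder β] (e : α ≃o β) {a : α} (ha : IsBot a) :
    IsBot (e a) :=
  fun _ => e.le_symm_apply.mp (ha _)

lemma IsLowerSet.exists_isBot [Preorder α] {s : Set α} {a : α} (hs : IsLowerSet s)
    (hne : s.Nonempty) (ha : IsBot a) : ∃ b : s, IsBot b := by
  obtain ⟨y, hy⟩ := hne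
  exact ⟨⟨a, hs (ha y) hy⟩, fun b => ha b⟩

lemma IsLowerSet.isBot_coe [LinearOrder α] {s : Set α} {a : s} (hs : IsLowerSet s)
    (ha : IsBot a) : IsBot (a : α) := by
  intro x
  by_contra! hxa
  exact (ha ⟨x, hs hxa.le a.2⟩).not_gt hxa

end

/-- No linear order `M` has both a downward-closed subset order-isomorphic to `ℕ` and a
downward-closed subset order-isomorphic to `ℚ`. -/
theorem stmt9 (M : Type) [LinearOrder M] :
    ¬ ∃ D₁ D₂ : Set M,
      (∀ y ∈ D₁, ∀ x, x < y → x ∈ D₁) ∧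
      (∀ y ∈ D₂, ∀ x, x < y → x ∈ D₂) ∧
      Nonempty (ℕ ≃o ↥D₁) ∧ Nonempty (ℚ ≃o ↥D₂) := by
  rintro ⟨D₁, D₂, hD₁, hD₂, ⟨f⟩, ⟨g⟩⟩
  have hD₁ : IsLowerSet D₁ := isLowerSet_iff_forall_lt.mpr fun y x hxy hy => hD₁ y hy x hxy
  have hD₂ : IsLowerSet D₂ := isLowerSet_iff_forall_lt.mpr fun y x hxy hy => hD₂ y hy x hxy
  have hbot : IsBot (f ⊥ : M) := hD₁.isBot_coe (f.isBot_apply isBot_bot)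
  obtain ⟨b, hb⟩ := hD₂.exists_isBot ⟨_, (g 0).2⟩ hbot
  exact not_isBot _ (g.symm.isBot_apply hb)
end

section
/- Let κ be an infinite cardinal with 2^{κ} = κ⁺. Let S and R be sets with |R| ≤ κ⁺, and let (f_i)_{i < κ⁺⁺} be a family of pairwise distinct partial functions from S to R, each with domain of cardinality at most κ. Then there exist indices i ≠ j such that f_i and f_j are compatible, i.e. they agree on the intersection of their domains. In particular, any antichain in the partial order of such functions (ordered by reverse inclusion of graphs, with two functions incompatible iff they disagree somewhere on the common domain) has cardinality at most κ⁺. -/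
/-!
Fix `μ = κ⁺`, a regular cardinal with `μ ^ κ = μ`. For any `T ⊆ S` of size at most `μ`, the
restrictions `f i ↾ T` are coded by graphs of size at most `κ` inside `T × R`, so there are at most
`μ` of them and a set of at most `μ` indices realises all of them. Iterating this `μ` times, each
time restricting to the union of the domains chosen so far, uses only `μ` indices, so some `j` is
never chosen. Since `μ` is regular, the domain of `f j`, of size at most `κ`, meets the covered part
of `S` inside one stage `T`; the index chosen at that stage with `f i ↾ T = f j ↾ T` is then
compatible with `f j`, because the domain of `f i` lies in the covered part.
-/

open Cardinal

universe u

theorem Cardinal.mk_iUnion_le_of_forall_le {α ι : Type u} {μ : Cardinal.{u}} (hμ : ℵ₀ ≤ μ)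
    {s : ι → Set α} (hι : #ι ≤ μ) (hs : ∀ i, #(s i) ≤ μ) : #(⋃ i, s i) ≤ μ :=
  (mk_iUnion_le s).trans <| (mul_le_mul' hι (ciSup_le' hs)).trans_eq (mul_eq_self hμ)

theorem Cardinal.power_eq_of_two_power_eq {κ μ : Cardinal} (hκ : ℵ₀ ≤ κ) (hpow : 2 ^ κ = μ) :
    μ ^ κ = μ := by
  rw [← hpow, ← power_mul, mul_eq_self hκ]

theorem Order.exists_forall_lt_of_mk_lt_cof {α : Type u} [LinearOrder α] {s : Set α}
    (hs : #s < Order.cof α) : ∃ b, ∀ a ∈ s, a < b := by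
  by_contra! h
  exact (Order.cof_le h).not_gt hs

section Restriction

variable {S R ι : Type u}

def optionGraph (T : Set S) (g : S → Option R) : Set (T × R) :=
  {p | g p.1 = some p.2}

theorem eqOn_of_optionGraph_eq {T : Set S} {g h : S → Option R}
    (hgh : optionGraph T g = optionGraph T h) : Set.EqOn g h T := fun x hx =>
  Option.ext fun r => Set.ext_iff.1 hgh (⟨x, hx⟩, r)

theorem mk_optionGraph_le (T : Set S) (g : S → Option R) :
    #(optionGraph T g) ≤ #{x | g x ≠ none} := by
  refine mk_le_of_injective (f := fun p => ⟨p.1.1.1, by simp [p.2.out]⟩) ?_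
  rintro ⟨⟨x, r⟩, hxr⟩ ⟨⟨y, s⟩, hys⟩ hxy
  have hxy' := congrArg Subtype.val hxy
  obtain rfl : x = y := Subtype.ext hxy'
  obtain rfl : r = s := Option.some_injective _ (hxr.out.symm.trans hys.out)
  rfl

theorem exists_mk_le_forall_exists_eqOn {κ μ : Cardinal.{u}} (hμ : ℵ₀ ≤ μ) (hpow : μ ^ κ = μ)
    (hR : #R ≤ μ) (f : ι → S → Option R) (hdom : ∀ i, #{x | f i x ≠ none} ≤ κ)
    {T : Set S} (hT : #T ≤ μ) :
    ∃ C : Set ι, #C ≤ μ ∧ ∀ j, ∃ i ∈ C, Set.EqOn (f i) (f j) T := by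
  let Γ : ι → {t : Set (T × R) // #t ≤ κ} := fun i =>
    ⟨optionGraph T (f i), (mk_optionGraph_le T (f i)).trans (hdom i)⟩
  have hgraphs : #{t : Set (T × R) // #t ≤ κ} ≤ μ :=
    calc #{t : Set (T × R) // #t ≤ κ} ≤ max #(T × R) ℵ₀ ^ κ := mk_bounded_set_le _ κ
      _ ≤ μ ^ κ := by
        refine power_le_power_right (max_le ?_ hμ)
        rw [mk_prod, lift_id, lift_id]
        exact (mul_le_mul' hT hR).trans_eq (mul_eq_self hμ)
      _ = μ := hpow
  refine ⟨Set.range fun t : Set.range Γ => t.2.choose, mk_range_le.trans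
    ((mk_set_le _).trans hgraphs), fun j => ⟨_, ⟨⟨Γ j, j, rfl⟩, rfl⟩, ?_⟩⟩
  have hΓ : Γ (Set.mem_range_self (f := Γ) j).choose = Γ j :=
    (Set.mem_range_self (f := Γ) j).choose_spec
  exact eqOn_of_optionGraph_eq (congrArg Subtype.val hΓ)

end Restriction

section Closure

variable {α S ι : Type u} [LinearOrder α] [WellFoundedLT α]

noncomputable def coveredBefore (D : ι → Set S) (rep : Set S → Set ι) : α → Set S :=
  wellFounded_lt.fix fun a T => ⋃ b : Set.Iio a, ⋃ i ∈ rep (T b b.2), D i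

theorem coveredBefore_eq (D : ι → Set S) (rep : Set S → Set ι) (a : α) :
    coveredBefore D rep a = ⋃ b : Set.Iio a, ⋃ i ∈ rep (coveredBefore D rep b.1), D i := by
  rw [coveredBefore, WellFounded.fix_eq]

theorem mk_coveredBefore_le {μ : Cardinal.{u}} (hμ : ℵ₀ ≤ μ) (hα : #α ≤ μ) {D : ι → Set S}
    (hD : ∀ i, #(D i) ≤ μ) {rep : Set S → Set ι} (hrep : ∀ T : Set S, #T ≤ μ → #(rep T) ≤ μ) (a : α) :
    #(coveredBefore D rep a) ≤ μ := by
  induction a using WellFoundedLT.induction with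
  | _ a ih =>
    rw [coveredBefore_eq]
    refine mk_iUnion_le_of_forall_le hμ ((mk_set_le _).trans hα) fun b => ?_
    rw [Set.biUnion_eq_iUnion]
    exact mk_iUnion_le_of_forall_le hμ (hrep _ (ih b b.2)) fun i => hD i

theorem exists_subset_coveredBefore (D : ι → Set S) (rep : Set S → Set ι) {s : Set S}
    (hs : #s < Order.cof α) (hcov : s ⊆ ⋃ a : α, ⋃ i ∈ rep (coveredBefore D rep a), D i) :
    ∃ b : α, s ⊆ coveredBefore D rep b := by
  choose stage hstage using fun x : s => Set.mem_iUnion.1 (hcov x.2)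
  obtain ⟨b, hb⟩ := Order.exists_forall_lt_of_mk_lt_cof (mk_range_le.trans_lt hs)
  refine ⟨b, fun x hx => ?_⟩
  rw [coveredBefore_eq]
  exact Set.mem_iUnion.2 ⟨⟨stage ⟨x, hx⟩, hb _ ⟨_, rfl⟩⟩, hstage ⟨x, hx⟩⟩

end Closure

theorem exists_ne_compatible_of_isRegular {S R ι : Type u} {μ : Cardinal.{u}} (hμ : μ.IsRegular)
    (f : ι → S → Option R) (hdom : ∀ i, #{x | f i x ≠ none} < μ)
    (hrep : ∀ T : Set S, #T ≤ μ → ∃ C : Set ι, #C ≤ μ ∧ ∀ j, ∃ i ∈ C, Set.EqOn (f i) (f j) T)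
    (hι : μ < #ι) :
    ∃ i j, i ≠ j ∧ ∀ x, f i x ≠ none → f j x ≠ none → f i x = f j x := by
  choose! rep hrep_card hrep_eqOn using hrep
  let D : ι → Set S := fun i => {x | f i x ≠ none}
  let T : μ.ord.ToType → Set S := coveredBefore D rep
  have hα : #μ.ord.ToType = μ := by rw [mk_toType, card_ord]
  have hT a : #(T a) ≤ μ :=
    mk_coveredBefore_le hμ.aleph0_le hα.le (fun i => (hdom i).le) hrep_card a
  obtain ⟨j, hj⟩ : ∃ j, j ∉ ⋃ a, rep (T a) := by
    by_contra! hall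
    have hchosen : #(⋃ a, rep (T a)) ≤ μ :=
      mk_iUnion_le_of_forall_le hμ.aleph0_le hα.le fun a => hrep_card _ (hT a)
    rw [Set.eq_univ_of_forall hall, mk_univ] at hchosen
    exact hchosen.not_gt hι
  obtain ⟨b, hb⟩ : ∃ b, D j ∩ ⋃ a, ⋃ i ∈ rep (T a), D i ⊆ T b := by
    refine exists_subset_coveredBefore D rep ?_ Set.inter_subset_right
    rw [Ordinal.cof_toType, hμ.cof_ord]
    exact (mk_le_mk_of_subset Set.inter_subset_left).trans_lt (hdom j)
  obtain ⟨i, hi, hij⟩ := hrep_eqOn (T b) (hT b) j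
  refine ⟨i, j, fun h => hj (Set.mem_iUnion.2 ⟨b, h ▸ hi⟩), fun x hxi hxj => hij ?_⟩
  exact hb ⟨hxj, Set.mem_iUnion.2 ⟨b, Set.mem_biUnion hi hxi⟩⟩

theorem exists_ne_compatible_of_two_power_eq_succ {κ : Cardinal.{u}} (hκ : ℵ₀ ≤ κ)
    (hpow : 2 ^ κ = Order.succ κ) {S R ι : Type u} (hR : #R ≤ Order.succ κ)
    (hι : Order.succ κ < #ι) (f : ι → S → Option R) (hdom : ∀ i, #{x | f i x ≠ none} ≤ κ) :
    ∃ i j, i ≠ j ∧ ∀ x, f i x ≠ none → f j x ≠ none → f i x = f j x :=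
  have hreg := isRegular_succ hκ
  exists_ne_compatible_of_isRegular hreg f (fun i => (hdom i).trans_lt (Order.lt_succ κ))
    (fun _ hT => exists_mk_le_forall_exists_eqOn hreg.aleph0_le
      (power_eq_of_two_power_eq hκ hpow) hR f hdom hT) hι

theorem stmt11_general (κ : Cardinal) (hκ : ℵ₀ ≤ κ) (hpow : 2 ^ κ = Order.succ κ)
    (S R : Type) (hR : #R ≤ Order.succ κ)
    (ι : Type) (hι : #ι = Order.succ (Order.succ κ))
    (f : ι → S → Option R)
    (hdom : ∀ i : ι, #{x : S | f i x ≠ none} ≤ κ) :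
    (∃ i j : ι, i ≠ j ∧
      ∀ x : S, f i x ≠ none → f j x ≠ none → f i x = f j x) ∧
    (∀ A : Set (S → Option R),
      (∀ g ∈ A, #{x : S | g x ≠ none} ≤ κ) →
      (∀ g ∈ A, ∀ h ∈ A, g ≠ h → ∃ x : S, g x ≠ none ∧ h x ≠ none ∧ g x ≠ h x) →
      #A ≤ Order.succ κ) := by
  refine ⟨exists_ne_compatible_of_two_power_eq_succ hκ hpow hR (hι ▸ Order.lt_succ _) f hdom,
    fun A hA hincompatible => ?_⟩
  by_contra! hlarge
  obtain ⟨g, h, hgh, hcompatible⟩ := exists_ne_compatible_of_two_power_eq_succ hκ hpow hR hlarge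
    (fun g : A => g.1) fun g => hA g.1 g.2
  obtain ⟨x, hgx, hhx, hne⟩ := hincompatible g g.2 h h.2 (Subtype.coe_ne_coe.2 hgh)
  exact hne (hcompatible x hgx hhx)

/-- Suppose `κ` is infinite with `2^κ = κ⁺` and `|R| ≤ κ⁺`. Given `κ⁺⁺`-many pairwise
distinct partial functions from `S` to `R` (coded as functions `S → Option R`), each
with domain of cardinality at most `κ`, two of them are compatible, i.e. agree on the
intersection of their domains. In particular, any family of such partial functions
which is pairwise incompatible has cardinality at most `κ⁺`. -/
theorem stmt11 (κ : Cardinal) (hκ : ℵ₀ ≤ κ) (hpow : 2 ^ κ = Order.succ κ)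
    (S R : Type) (hR : #R ≤ Order.succ κ)
    (ι : Type) (hι : #ι = Order.succ (Order.succ κ))
    (f : ι → S → Option R) (hinj : Function.Injective f)
    (hdom : ∀ i : ι, #{x : S | f i x ≠ none} ≤ κ) :
    (∃ i j : ι, i ≠ j ∧
      ∀ x : S, f i x ≠ none → f j x ≠ none → f i x = f j x) ∧
    (∀ A : Set (S → Option R),
      (∀ g ∈ A, #{x : S | g x ≠ none} ≤ κ) →
      (∀ g ∈ A, ∀ h ∈ A, g ≠ h → ∃ x : S, g x ≠ none ∧ h x ≠ none ∧ g x ≠ h x) →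
      #A ≤ Order.succ κ) :=
  stmt11_general κ hκ hpow S R hR ι hι f hdom
end

section
/- Let μ ≤ λ ≤ κ be infinite cardinals with μ < κ and suppose there exists a (μ, λ, κ)-Kurepa tree T. Then for every infinite cardinal ν ≤ κ there exists a tree T' of height at most μ, each of whose levels has fewer than λ elements, such that the cardinality of T' together with its set of cofinal branches is exactly ν (one may take a subtree of T together with a suitable subfamily of its cofinal branches). -/
open Cardinal Ordinal

/-- A `(μ, l, κ)`-Kurepa tree: a tree of height `μ`, all of whose levels have fewer
than `l` elements, with exactly `κ` cofinal branches. -/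
def IsGenKurepaTree (μ l κ : Cardinal) (α : Type) [PartialOrder α] : Prop :=
  IsTreeOrder α ∧ treeHeight α = μ.ord ∧ (∀ o : Ordinal, #(level α o) < l) ∧
    branchCard α = κ

/-!
For `ν ≤ μ` the ordinal `ν`, viewed as a linear tree, already works: height `ν`, singleton
levels, `ν` elements and no branches needed. For `μ < ν`, choose `ν` cofinal branches of the
Kurepa tree. Branches are downward closed, so their union is a subtree in which heights and
levels are computed as in the whole tree, and the chosen branches stay cofinal branches of it.
Heights are injective along a chain, so each branch has at most `μ` elements and the union has
at most `ν · μ = ν`.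
-/

section Tree
variable {α : Type} [PartialOrder α]

lemma elemHeight_eq_type (x : α) [h : IsWellOrder {y : α // y < x} (· < ·)] :
    elemHeight x = type ((· < ·) : {y : α // y < x} → {y : α // y < x} → Prop) := by
  simp only [elemHeight, dif_pos h]

lemma elemHeight_eq_of_relIso {β : Type} [PartialOrder β] {x : α} {x' : β}
    (e : ((· < ·) : {y : α // y < x} → {y : α // y < x} → Prop) ≃r
      ((· < ·) : {y : β // y < x'} → {y : β // y < x'} → Prop)) :
    elemHeight x = elemHeight x' := by
  by_cases h : IsWellOrder {y : β // y < x'} (· < ·)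
  · have := h
    have := e.toRelEmbedding.isWellOrder
    rw [elemHeight_eq_type x, elemHeight_eq_type x']
    exact type_eq.2 ⟨e⟩
  · have h' : ¬ IsWellOrder {y : α // y < x} (· < ·) := fun h' =>
      h (@RelEmbedding.isWellOrder _ _ _ _ e.symm.toRelEmbedding h')
    simp only [elemHeight, dif_neg h, dif_neg h']

def predsRelIsoSubrel {x y : α} (hyx : y < x) :
    ((· < ·) : {z : α // z < y} → {z : α // z < y} → Prop) ≃r
      Subrel ((· < ·) : {z : α // z < x} → {z : α // z < x} → Prop)
        {b : {z : α // z < x} | b < ⟨y, hyx⟩} where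
  toFun z := ⟨⟨z.1, z.2.trans hyx⟩, z.2⟩
  invFun w := ⟨w.1.1, w.2⟩
  left_inv _ := rfl
  right_inv _ := rfl
  map_rel_iff' := Iff.rfl

lemma elemHeight_eq_typein_of_lt {x y : α} [IsWellOrder {z : α // z < x} (· < ·)]
    (hyx : y < x) : elemHeight y = typein (· < ·) (⟨y, hyx⟩ : {z : α // z < x}) := by
  have : IsWellOrder {z : α // z < y} (· < ·) :=
    ((predsRelIsoSubrel hyx).toRelEmbedding.trans (Subrel.relEmbedding _ _)).isWellOrder
  rw [elemHeight_eq_type y, ← type_subrel]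
  exact type_eq.2 ⟨predsRelIsoSubrel hyx⟩

lemma elemHeight_lt_elemHeight {x y : α} [IsWellOrder {z : α // z < x} (· < ·)] (hyx : y < x) :
    elemHeight y < elemHeight x := by
  rw [elemHeight_eq_typein_of_lt hyx, elemHeight_eq_type x]
  exact typein_lt_type _ _

lemma exists_lt_elemHeight_eq {x : α} [IsWellOrder {z : α // z < x} (· < ·)] {o : Ordinal}
    (ho : o < elemHeight x) : ∃ y < x, elemHeight y = o := by
  rw [elemHeight_eq_type x] at ho
  obtain ⟨y, rfl⟩ := typein_surj _ ho
  exact ⟨y.1, y.2, elemHeight_eq_typein_of_lt y.2⟩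

lemma elemHeight_lt_ord_succ_mk (x : α) : elemHeight x < (Order.succ #α).ord := by
  rw [lt_ord]
  by_cases h : IsWellOrder {y : α // y < x} (· < ·)
  · rw [elemHeight_eq_type x, card_type]
    exact (mk_subtype_le _).trans_lt (Order.lt_succ _)
  · simp only [elemHeight, dif_neg h, card_zero]
    exact lt_of_le_of_lt zero_le (Order.lt_succ _)

lemma level_treeHeight : level α (treeHeight α) = ∅ :=
  csInf_mem (s := {o | level α o = ∅})
    ⟨(Order.succ #α).ord, Set.eq_empty_of_forall_notMem fun x hx =>
      (elemHeight_lt_ord_succ_mk x).ne hx⟩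

lemma treeHeight_le_of_level_eq_empty {o : Ordinal} (h : level α o = ∅) : treeHeight α ≤ o :=
  csInf_le' h

lemma IsTreeOrder.elemHeight_lt_treeHeight (hT : IsTreeOrder α) (x : α) :
    elemHeight x < treeHeight α := by
  have hempty : ∀ y : α, elemHeight y ≠ treeHeight α := fun y hy =>
    (level_treeHeight (α := α)).subset hy
  have := hT x
  refine lt_of_le_of_ne (not_lt.1 fun hlt => ?_) (hempty x)
  obtain ⟨y, -, hy⟩ := exists_lt_elemHeight_eq hlt
  exact hempty y hy

lemma IsTreeOrder.lt_trichotomy_of_lt (hT : IsTreeOrder α) {x y z : α} (hyx : y < x)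
    (hzx : z < x) : y < z ∨ y = z ∨ z < y := by
  have := hT x
  simpa only [Subtype.mk_lt_mk, Subtype.mk.injEq] using
    trichotomous_of ((· < ·) : {w : α // w < x} → {w : α // w < x} → Prop)
      ⟨y, hyx⟩ ⟨z, hzx⟩

lemma IsTreeOrder.isLowerSet_of_isMaxChain (hT : IsTreeOrder α) {B : Set α}
    (hB : IsMaxChain (· < ·) B) : IsLowerSet B := by
  intro x y hyx hx
  rcases hyx.eq_or_lt with rfl | hyx
  · exact hx
  by_contra hy
  have hchain : IsChain (· < ·) (insert y B) := hB.1.insert fun b hb hyb => by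
    rcases eq_or_ne b x with rfl | hbx
    · exact Or.inl hyx
    rcases hB.1 hb hx hbx with hbx | hxb
    · rcases hT.lt_trichotomy_of_lt hyx hbx with h | rfl | h
      exacts [Or.inl h, (hyb rfl).elim, Or.inr h]
    · exact Or.inl (hyx.trans hxb)
  exact hy (hB.2 hchain (Set.subset_insert y B) ▸ Set.mem_insert y B)

lemma IsTreeOrder.mk_chain_le_card_treeHeight (hT : IsTreeOrder α) {B : Set α}
    (hB : IsChain (· < ·) B) : #B ≤ (treeHeight α).card := by
  have hinj : Function.Injective fun b : B =>
      (⟨elemHeight b.1, hT.elemHeight_lt_treeHeight b⟩ : Set.Iio (treeHeight α)) := by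
    intro b c hbc
    by_contra hne
    have hheight : elemHeight b.1 = elemHeight c.1 := congrArg Subtype.val hbc
    rcases hB b.2 c.2 (Subtype.coe_ne_coe.2 hne) with h | h
    · exact (@elemHeight_lt_elemHeight _ _ _ _ (hT c) h).ne hheight
    · exact (@elemHeight_lt_elemHeight _ _ _ _ (hT b) h).ne hheight.symm
  have := lift_mk_le_lift_mk_of_injective hinj
  rwa [Cardinal.mk_Iio_ordinal, Cardinal.lift_lift, Cardinal.lift_le] at this

lemma IsTreeOrder.mk_sUnion_le (hT : IsTreeOrder α) {S : Set (Set α)}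
    (hS : ∀ B ∈ S, IsChain (· < ·) B) : #(⋃₀ S) ≤ #S * (treeHeight α).card :=
  (Cardinal.mk_sUnion_le S).trans <|
    mul_le_mul_right (ciSup_le' fun B : S => hT.mk_chain_le_card_treeHeight (hS B.1 B.2)) _

end Tree

section Subtree
variable {α : Type} [PartialOrder α] {s : Set α}

lemma IsTreeOrder.subtype (hT : IsTreeOrder α) (s : Set α) : IsTreeOrder s := fun x =>
  have := hT x
  RelEmbedding.isWellOrder (s := ((· < ·) : {z : α // z < x.1} → {z : α // z < x.1} → Prop))
    ⟨⟨fun y => ⟨y.1.1, y.2⟩, fun _ _ h => by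
      injection h with h
      exact Subtype.ext (Subtype.ext h)⟩, Iff.rfl⟩

lemma IsLowerSet.elemHeight_coe (hs : IsLowerSet s) (x : s) : elemHeight x = elemHeight x.1 :=
  elemHeight_eq_of_relIso
    { toFun := fun y => ⟨y.1.1, y.2⟩
      invFun := fun z => ⟨⟨z.1, hs z.2.le x.2⟩, z.2⟩
      left_inv := fun _ => rfl
      right_inv := fun _ => rfl
      map_rel_iff' := Iff.rfl }

lemma IsLowerSet.level_subtype (hs : IsLowerSet s) (o : Ordinal) :
    level s o = (↑) ⁻¹' level α o := by
  ext x
  show elemHeight x = o ↔ elemHeight x.1 = o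
  rw [hs.elemHeight_coe x]

lemma IsLowerSet.mk_level_subtype_le (hs : IsLowerSet s) (o : Ordinal) :
    #(level s o) ≤ #(level α o) := by
  rw [hs.level_subtype]
  exact mk_preimage_of_injective _ _ Subtype.val_injective

lemma IsLowerSet.treeHeight_subtype_le (hs : IsLowerSet s) : treeHeight s ≤ treeHeight α :=
  treeHeight_le_of_level_eq_empty <| by
    rw [hs.level_subtype, level_treeHeight, Set.preimage_empty]

lemma IsCofinalBranch.preimage_coe {B : Set α} (hB : IsCofinalBranch α B) (hs : IsLowerSet s)
    (hBs : B ⊆ s) : IsCofinalBranch s ((↑) ⁻¹' B) := by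
  refine ⟨⟨hB.1.1.preimage _ _ _ Subtype.val_injective fun _ _ h => h, fun C hC hBC => ?_⟩,
    fun o ⟨x, hx⟩ => ?_⟩
  · have hCimage : B = (↑) '' C :=
      hB.1.2 (hC.image_of_map_rel _ _ (Subtype.val : s → α) fun _ _ h => h)
        fun y hy => ⟨⟨y, hBs hy⟩, hBC hy, rfl⟩
    refine hBC.antisymm fun c hc => ?_
    rw [Set.mem_preimage, hCimage]
    exact Set.mem_image_of_mem _ hc
  · obtain ⟨y, hyB, hy⟩ := hB.2 o ⟨x.1, (hs.elemHeight_coe x).symm.trans hx⟩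
    exact ⟨⟨y, hBs hyB⟩, hyB, (hs.elemHeight_coe _).trans hy⟩

end Subtree

lemma mk_image_preimage_coe {α : Type*} {s : Set α} {S : Set (Set α)}
    (hS : ∀ B ∈ S, B ⊆ s) :
    #((fun B => ((↑) : s → α) ⁻¹' B) '' S) = #S := by
  refine mk_image_eq_of_injOn _ _ fun B hB C hC hBC => ?_
  rw [← Set.inter_eq_right.2 (hS B hB), ← Set.inter_eq_right.2 (hS C hC)]
  exact Subtype.preimage_coe_eq_preimage_coe_iff.1 hBC

section WellOrder
variable {β : Type} [LinearOrder β] [WellFoundedLT β]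

lemma isTreeOrder_of_wellFoundedLT : IsTreeOrder β := fun x =>
  (Subrel.relEmbedding ((· < ·) : β → β → Prop) {y | y < x}).isWellOrder

lemma elemHeight_eq_typein (x : β) : elemHeight x = typein (α := β) (· < ·) x := by
  have := isTreeOrder_of_wellFoundedLT x
  rw [elemHeight_eq_type x, ← type_subrel]
  exact type_eq.2 ⟨RelIso.refl _⟩

lemma level_subsingleton_of_wellFoundedLT (o : Ordinal) : (level β o).Subsingleton :=
  fun x hx y hy => typein_injective (α := β) (· < ·) <| by
    rw [← elemHeight_eq_typein, ← elemHeight_eq_typein]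
    exact hx.trans hy.symm

lemma treeHeight_le_type : treeHeight β ≤ type ((· < ·) : β → β → Prop) :=
  treeHeight_le_of_level_eq_empty <| Set.eq_empty_of_forall_notMem fun x hx =>
    (typein_lt_type _ x).ne ((elemHeight_eq_typein x).symm.trans hx)

end WellOrder

theorem stmt12_general (μ lam κ : Cardinal) (hμ : ℵ₀ ≤ μ) (hμlam : μ ≤ lam)
    (hex : ∃ (α : Type) (inst : PartialOrder α), @IsGenKurepaTree μ lam κ α inst) :
    ∀ ν : Cardinal, ℵ₀ ≤ ν → ν ≤ κ →
      ∃ (α' : Type) (inst : PartialOrder α'),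
        @IsTreeOrder α' inst ∧
        @treeHeight α' inst ≤ μ.ord ∧
        (∀ o : Ordinal, #(@level α' inst o) < lam) ∧
        ∃ X : Set (Set α'), (∀ B ∈ X, @IsCofinalBranch α' inst B) ∧ #α' + #X = ν := by
  intro ν hν hνκ
  rcases le_or_gt ν μ with hνμ | hμν
  · refine ⟨ν.ord.ToType, inferInstance, isTreeOrder_of_wellFoundedLT, ?_, fun o => ?_, ∅,
      fun _ h => h.elim, by simp⟩
    · exact treeHeight_le_type.trans ((type_toType _).trans_le (ord_le_ord.2 hνμ))
    · exact (mk_le_one_iff_set_subsingleton.2 (level_subsingleton_of_wellFoundedLT o)).trans_lt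
        (one_lt_aleph0.trans_le (hμ.trans hμlam))
  · obtain ⟨α, _, hT, hH, hlev, hbr⟩ := hex
    obtain ⟨S, hS, hSν⟩ := le_mk_iff_exists_subset.1 (hbr ▸ hνκ : ν ≤ branchCard α)
    have hlower : IsLowerSet (⋃₀ S) :=
      isLowerSet_sUnion fun B hB => hT.isLowerSet_of_isMaxChain (hS hB).1
    have hsub : ∀ B ∈ S, B ⊆ ⋃₀ S := fun B hB => Set.subset_sUnion_of_mem hB
    refine ⟨⋃₀ S, inferInstance, hT.subtype _, hH ▸ hlower.treeHeight_subtype_le,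
      fun o => (hlower.mk_level_subtype_le o).trans_lt (hlev o),
      (fun B => ((↑) : ⋃₀ S → α) ⁻¹' B) '' S, ?_, ?_⟩
    · rintro _ ⟨B, hB, rfl⟩
      exact IsCofinalBranch.preimage_coe (hS hB) hlower (hsub B hB)
    · have hcard : #(⋃₀ S) ≤ ν := calc
        #(⋃₀ S) ≤ #S * (treeHeight α).card := hT.mk_sUnion_le fun B hB => (hS hB).1.1
        _ ≤ ν * ν := by rw [hSν, hH, card_ord]; exact mul_le_mul_right hμν.le _
        _ = ν := mul_eq_self hν
      rw [mk_image_preimage_coe hsub, hSν, add_eq_right hν hcard]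

/-- Downward transfer: if there is a `(μ, λ, κ)`-Kurepa tree, then for every infinite
`ν ≤ κ` there is a tree of height at most `μ` with levels of fewer than `λ` elements,
together with a family of its cofinal branches, whose total cardinality is exactly `ν`. -/
theorem stmt12 (μ lam κ : Cardinal) (hμ : ℵ₀ ≤ μ) (hμlam : μ ≤ lam) (hlamκ : lam ≤ κ)
    (hμκ : μ < κ)
    (hex : ∃ (α : Type) (inst : PartialOrder α), @IsGenKurepaTree μ lam κ α inst) :
    ∀ ν : Cardinal, ℵ₀ ≤ ν → ν ≤ κ →
      ∃ (α' : Type) (inst : PartialOrder α'),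
        @IsTreeOrder α' inst ∧
        @treeHeight α' inst ≤ μ.ord ∧
        (∀ o : Ordinal, #(@level α' inst o) < lam) ∧
        ∃ X : Set (Set α'), (∀ B ∈ X, @IsCofinalBranch α' inst B) ∧ #α' + #X = ν :=
  stmt12_general μ lam κ hμ hμlam hex
end
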